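/- Define v(θ₁,θ₂) = 3Λ(θ₂) + Λ(θ₂+θ₁) + Λ(θ₂−θ₁) − Λ(2θ₂), where Λ is the Lobachevsky function. Then v(θ₁,θ₂) ≤ 0 for all −1 < θ₁ < 1 and 1/2 ≤ θ₂ ≤ 1. -/

import Mathlib

/-!
The integrand `L = logAbsTwoSin` of `Λ` is locally integrable, even and 1-periodic, and
`L (2σ) = L σ + L (σ + 1/2)` almost everywhere. Integrating this gives `Λ 1 = 0`, so `Λ` is odd
and 1-periodic, `Λ (1/2) = 0`, and `Λ (2θ) = 2 Λ θ + 2 Λ (θ + 1/2)`. Hence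
`v = Λ θ₂ + (Λ (θ₂ + θ₁) + Λ (θ₂ - θ₁) - 2 Λ (θ₂ + 1/2))`. The first term is `≤ 0` on `[1/2, 1]`
by the sign pattern of `L`. The bracket is even and 1-periodic in `θ₁` and vanishes at
`θ₁ = 1/2`; on `[0, 1/2]` its derivative `L (θ₂ - θ₁) - L (θ₂ + θ₁)` is `≥ 0`, because
`sin² π(θ₂ - θ₁) - sin² π(θ₂ + θ₁) = -sin 2πθ₂ · sin 2πθ₁ ≥ 0`.
-/

open scoped Real

/-- The Lobachevsky function `Λ(θ) = -∫₀^θ log|2 sin(πτ)| dτ`. -/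
noncomputable def Lob (θ : ℝ) : ℝ := -∫ τ in (0:ℝ)..θ, Real.log |2 * Real.sin (π * τ)|

open Real MeasureTheory intervalIntegral Set Function
open scoped Interval

noncomputable def logAbsTwoSin (τ : ℝ) : ℝ := log |2 * sin (π * τ)|

lemma Lob_eq_neg_integral (θ : ℝ) : Lob θ = -∫ τ in (0:ℝ)..θ, logAbsTwoSin τ := rfl

lemma logAbsTwoSin_periodic : Periodic logAbsTwoSin 1 := fun τ => by
  simp only [logAbsTwoSin, mul_add, mul_one, sin_add_pi, mul_neg, abs_neg]

lemma logAbsTwoSin_neg (τ : ℝ) : logAbsTwoSin (-τ) = logAbsTwoSin τ := by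
  simp only [logAbsTwoSin, mul_neg, sin_neg, abs_neg]

lemma logAbsTwoSin_one_sub (τ : ℝ) : logAbsTwoSin (1 - τ) = logAbsTwoSin τ := by
  rw [sub_eq_neg_add, logAbsTwoSin_periodic, logAbsTwoSin_neg]

lemma intervalIntegrable_logAbsTwoSin (a b : ℝ) :
    IntervalIntegrable logAbsTwoSin volume a b := by
  have hf : AnalyticOnNhd ℝ (fun τ => 2 * sin (π * τ)) [[a, b]] := fun τ _ => by fun_prop
  exact hf.meromorphicOn.intervalIntegrable_log_norm

lemma ae_sin_mul_add_ne_zero {a : ℝ} (ha : a ≠ 0) (b : ℝ) : ∀ᵐ x : ℝ, sin (a * x + b) ≠ 0 := by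
  filter_upwards [(countable_range fun n : ℤ => (n * π - b) / a).ae_notMem volume] with x hx hsin
  obtain ⟨n, hn⟩ := sin_eq_zero_iff.1 hsin
  exact hx ⟨n, by field_simp; linarith⟩

lemma logAbsTwoSin_two_mul {σ : ℝ} (h : sin (2 * π * σ) ≠ 0) :
    logAbsTwoSin (2 * σ) = logAbsTwoSin σ + logAbsTwoSin (σ + 1 / 2) := by
  rw [mul_assoc, sin_two_mul, mul_assoc, mul_ne_zero_iff, mul_ne_zero_iff] at h
  have hdouble : 2 * sin (π * (2 * σ)) = 2 * sin (π * σ) * (2 * cos (π * σ)) := by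
    rw [mul_left_comm, sin_two_mul]; ring
  have hshift : π * (σ + 1 / 2) = π * σ + π / 2 := by ring
  simp only [logAbsTwoSin, hdouble, hshift, sin_add_pi_div_two, abs_mul]
  exact log_mul (by simp [h.2.1]) (by simp [h.2.2])

lemma integral_logAbsTwoSin_two_mul (θ : ℝ) :
    ∫ σ in (0:ℝ)..θ, logAbsTwoSin (2 * σ) =
      (∫ σ in (0:ℝ)..θ, logAbsTwoSin σ) + ∫ σ in (1 / 2 : ℝ)..θ + 1 / 2, logAbsTwoSin σ := by
  have hae : ∀ᵐ σ : ℝ, σ ∈ Ι 0 θ →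
      logAbsTwoSin (2 * σ) = logAbsTwoSin σ + logAbsTwoSin (σ + 1 / 2) := by
    filter_upwards [ae_sin_mul_add_ne_zero (by positivity : 2 * π ≠ 0) 0] with σ hσ _
    exact logAbsTwoSin_two_mul (by simpa using hσ)
  have hshift : IntervalIntegrable (fun σ => logAbsTwoSin (σ + 1 / 2)) volume 0 θ := by
    simpa using (intervalIntegrable_logAbsTwoSin (0 + 1 / 2) (θ + 1 / 2)).comp_add_right (1 / 2)
  rw [integral_congr_ae hae, integral_add (intervalIntegrable_logAbsTwoSin 0 θ) hshift,
    integral_comp_add_right, zero_add]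

lemma Lob_sub_Lob (a b : ℝ) : Lob b - Lob a = -∫ τ in a..b, logAbsTwoSin τ := by
  rw [Lob_eq_neg_integral, Lob_eq_neg_integral, ← integral_interval_sub_left
    (intervalIntegrable_logAbsTwoSin 0 b) (intervalIntegrable_logAbsTwoSin 0 a)]
  ring

lemma Lob_zero : Lob 0 = 0 := by simp [Lob]

lemma Lob_two_mul_eq_sub (θ : ℝ) :
    Lob (2 * θ) = 2 * Lob θ + 2 * (Lob (θ + 1 / 2) - Lob (1 / 2)) := by
  have hscale := integral_comp_mul_left logAbsTwoSin (two_ne_zero (α := ℝ)) (a := 0) (b := θ)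
  rw [integral_logAbsTwoSin_two_mul, mul_zero, smul_eq_mul] at hscale
  rw [Lob_eq_neg_integral, Lob_eq_neg_integral, Lob_sub_Lob]
  linarith

lemma Lob_one : Lob 1 = 0 := by
  have h := Lob_two_mul_eq_sub (1 / 2)
  norm_num at h
  linarith

lemma Lob_periodic : Periodic Lob 1 := fun x => by
  have h := logAbsTwoSin_periodic.intervalIntegral_add_eq x 0
  have h₁ := Lob_sub_Lob x (x + 1)
  have h₂ := Lob_sub_Lob 0 1
  rw [zero_add] at h
  rw [Lob_one, Lob_zero] at h₂
  linarith

lemma Lob_neg (x : ℝ) : Lob (-x) = -Lob x := by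
  have h := integral_comp_neg (a := 0) (b := x) logAbsTwoSin
  simp only [logAbsTwoSin_neg, neg_zero] at h
  rw [Lob_eq_neg_integral, Lob_eq_neg_integral, h, integral_symm]

lemma Lob_half : Lob (1 / 2) = 0 := by
  have h := Lob_periodic (-(1 / 2))
  rw [Lob_neg, show -(1 / 2) + 1 = (1 / 2 : ℝ) by norm_num] at h
  linarith

lemma Lob_two_mul (θ : ℝ) : Lob (2 * θ) = 2 * Lob θ + 2 * Lob (θ + 1 / 2) := by
  rw [Lob_two_mul_eq_sub, Lob_half, sub_zero]

lemma logAbsTwoSin_nonneg {τ : ℝ} (h₁ : 1 / 6 ≤ τ) (h₂ : τ ≤ 1 / 2) : 0 ≤ logAbsTwoSin τ := by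
  have hsin : sin (π / 6) ≤ sin (π * τ) :=
    sin_le_sin_of_le_of_le_pi_div_two (by linarith [pi_pos]) (by nlinarith [pi_pos])
      (by nlinarith [pi_pos])
  rw [sin_pi_div_six] at hsin
  exact log_nonneg (by rw [abs_of_pos (by linarith)]; linarith)

lemma logAbsTwoSin_nonpos {τ : ℝ} (h₁ : 0 ≤ τ) (h₂ : τ ≤ 1 / 6) : logAbsTwoSin τ ≤ 0 := by
  have hsin : sin (π * τ) ≤ sin (π / 6) :=
    sin_le_sin_of_le_of_le_pi_div_two (by nlinarith [pi_pos]) (by linarith [pi_pos])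
      (by nlinarith [pi_pos])
  have hpos : 0 ≤ sin (π * τ) :=
    sin_nonneg_of_nonneg_of_le_pi (by positivity) (by nlinarith [pi_pos])
  rw [sin_pi_div_six] at hsin
  exact log_nonpos (abs_nonneg _) (by rw [abs_of_nonneg (by linarith)]; linarith)

lemma Lob_nonpos {x : ℝ} (h₁ : 1 / 2 ≤ x) (h₂ : x ≤ 1) : Lob x ≤ 0 := by
  rcases le_total x (5 / 6) with hx | hx
  · have hint : 0 ≤ ∫ u in (1 / 2)..x, logAbsTwoSin u := integral_nonneg h₁ fun u hu => by
      rw [← logAbsTwoSin_one_sub]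
      exact logAbsTwoSin_nonneg (by linarith [hu.2]) (by linarith [hu.1])
    linarith [Lob_sub_Lob (1 / 2) x, Lob_half]
  · have hint : 0 ≤ ∫ u in x..1, -logAbsTwoSin u := integral_nonneg h₂ fun u hu => by
      rw [← logAbsTwoSin_one_sub, neg_nonneg]
      exact logAbsTwoSin_nonpos (by linarith [hu.2]) (by linarith [hu.1])
    rw [intervalIntegral.integral_neg] at hint
    linarith [Lob_sub_Lob x 1, Lob_one]

lemma sin_sq_sub_sin_sq (x y : ℝ) : sin x ^ 2 - sin y ^ 2 = sin (x + y) * sin (x - y) := by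
  rw [sin_add, sin_sub]
  linear_combination sin y ^ 2 * sin_sq_add_cos_sq x - sin x ^ 2 * sin_sq_add_cos_sq y

lemma abs_sin_add_le_abs_sin_sub {θ u : ℝ} (hθ₁ : 1 / 2 ≤ θ) (hθ₂ : θ ≤ 1) (hu₁ : 0 ≤ u)
    (hu₂ : u ≤ 1 / 2) : |sin (π * (θ + u))| ≤ |sin (π * (θ - u))| := by
  have hθ : 0 ≤ sin (2 * π * θ - π) :=
    sin_nonneg_of_nonneg_of_le_pi (by nlinarith [pi_pos]) (by nlinarith [pi_pos])
  have hu : 0 ≤ sin (2 * π * u) :=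
    sin_nonneg_of_nonneg_of_le_pi (by nlinarith [pi_pos]) (by nlinarith [pi_pos])
  have hdiff := sin_sq_sub_sin_sq (π * (θ - u)) (π * (θ + u))
  rw [show π * (θ - u) + π * (θ + u) = 2 * π * θ - π + π by ring,
    show π * (θ - u) - π * (θ + u) = -(2 * π * u) by ring, sin_add_pi, sin_neg] at hdiff
  exact sq_le_sq.1 (by nlinarith)

lemma logAbsTwoSin_add_le_sub {θ u : ℝ} (hθ₁ : 1 / 2 ≤ θ) (hθ₂ : θ ≤ 1) (hu₁ : 0 ≤ u)
    (hu₂ : u ≤ 1 / 2) (h : sin (π * (θ + u)) ≠ 0) :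
    logAbsTwoSin (θ + u) ≤ logAbsTwoSin (θ - u) := by
  simp only [logAbsTwoSin, abs_mul]
  exact log_le_log (mul_pos (by norm_num) (abs_pos.2 h))
    (mul_le_mul_of_nonneg_left (abs_sin_add_le_abs_sin_sub hθ₁ hθ₂ hu₁ hu₂) (abs_nonneg 2))

lemma Lob_add_add_Lob_sub_le_of_nonneg {θ t : ℝ} (hθ₁ : 1 / 2 ≤ θ) (hθ₂ : θ ≤ 1) (ht₁ : 0 ≤ t)
    (ht₂ : t ≤ 1 / 2) : Lob (θ + t) + Lob (θ - t) ≤ 2 * Lob (θ + 1 / 2) := by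
  have hplus : Lob (θ + 1 / 2) - Lob (θ + t) = -∫ u in t..1 / 2, logAbsTwoSin (θ + u) := by
    rw [Lob_sub_Lob, integral_comp_add_left]
  have hminus : Lob (θ - 1 / 2) - Lob (θ - t) = ∫ u in t..1 / 2, logAbsTwoSin (θ - u) := by
    rw [Lob_sub_Lob, integral_comp_sub_left, integral_symm, neg_neg]
  have hperiod : Lob (θ - 1 / 2) = Lob (θ + 1 / 2) := by
    rw [← Lob_periodic (θ - 1 / 2)]; ring_nf
  have hcompare :
      ∫ u in t..1 / 2, logAbsTwoSin (θ + u) ≤ ∫ u in t..1 / 2, logAbsTwoSin (θ - u) := by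
    refine integral_mono_ae_restrict ht₂
      (by simpa using (intervalIntegrable_logAbsTwoSin (θ + t) (θ + 1 / 2)).comp_add_left θ)
      (by simpa using (intervalIntegrable_logAbsTwoSin (θ - t) (θ - 1 / 2)).comp_sub_left θ) ?_
    filter_upwards [ae_restrict_mem measurableSet_Icc,
      ae_restrict_of_ae (ae_sin_mul_add_ne_zero pi_ne_zero (π * θ))] with u hu hsin
    exact logAbsTwoSin_add_le_sub hθ₁ hθ₂ (ht₁.trans hu.1) hu.2 (by rwa [mul_add, add_comm])
  linarith

lemma Lob_add_add_Lob_sub_le {θ : ℝ} (hθ₁ : 1 / 2 ≤ θ) (hθ₂ : θ ≤ 1) (t : ℝ) :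
    Lob (θ + t) + Lob (θ - t) ≤ 2 * Lob (θ + 1 / 2) := by
  set s := t - round t
  have hplus : Lob (θ + t) = Lob (θ + s) := by
    rw [show θ + s = θ + t - round t * 1 by ring, Lob_periodic.sub_int_mul_eq]
  have hminus : Lob (θ - t) = Lob (θ - s) := by
    rw [show θ - s = θ - t - (-round t : ℤ) * 1 by push_cast; ring, Lob_periodic.sub_int_mul_eq]
  rw [hplus, hminus]
  rcases abs_le.1 (abs_sub_round t) with ⟨hs₁, hs₂⟩
  rcases le_total 0 s with hs | hs
  · exact Lob_add_add_Lob_sub_le_of_nonneg hθ₁ hθ₂ hs hs₂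
  · have h := Lob_add_add_Lob_sub_le_of_nonneg hθ₁ hθ₂ (neg_nonneg.2 hs) (by linarith)
    rwa [← sub_eq_add_neg, sub_neg_eq_add, add_comm] at h

theorem v_nonpositive_general (θ₁ θ₂ : ℝ)
    (h3 : 1/2 ≤ θ₂) (h4 : θ₂ ≤ 1) :
    3 * Lob θ₂ + Lob (θ₂ + θ₁) + Lob (θ₂ - θ₁) - Lob (2 * θ₂) ≤ 0 := by
  rw [Lob_two_mul]
  linarith [Lob_add_add_Lob_sub_le h3 h4 θ₁, Lob_nonpos h3 h4]

/-- `v(θ₁,θ₂) = 3Λ(θ₂) + Λ(θ₂+θ₁) + Λ(θ₂−θ₁) − Λ(2θ₂) ≤ 0` for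
`-1 < θ₁ < 1` and `1/2 ≤ θ₂ ≤ 1`. -/
theorem v_nonpositive (θ₁ θ₂ : ℝ) (h1 : -1 < θ₁) (h2 : θ₁ < 1)
    (h3 : 1/2 ≤ θ₂) (h4 : θ₂ ≤ 1) :
    3 * Lob θ₂ + Lob (θ₂ + θ₁) + Lob (θ₂ - θ₁) - Lob (2 * θ₂) ≤ 0 :=
  v_nonpositive_general θ₁ θ₂ h3 h4
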